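/- arXiv:1006.1346 — 6 statements merged into one kernel-verified Lean document; each statement's English description precedes it below -/
import Mathlib

section
/- For any vector w ∈ ℝ^g and parameters λ₁, λ₂ > 0, the minimizer z* of the function z ↦ (1/2)‖z − w‖₂² + λ₂‖z‖₂ + λ₁‖z‖₁ is given by z* = (max{0, ‖h‖₂ − λ₂}/‖h‖₂)·h when ‖h‖₂ > 0 and z* = 0 when h = 0, where h ∈ ℝ^g is defined componentwise by h_i = sgn(w_i)·max{0, |w_i| − λ₁}. -/
noncomputable def l2norm {g : ℕ} (x : Fin g → ℝ) : ℝ := Real.sqrt (∑ i, x i ^ 2)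
noncomputable def l1norm {g : ℕ} (x : Fin g → ℝ) : ℝ := ∑ i, |x i|

set_option maxHeartbeats 1000000 in
/-- Closed-form solution of the HiLasso proximal subproblem. -/
theorem hilasso_prox_closed_form {g : ℕ} (w : Fin g → ℝ) (lam1 lam2 : ℝ)
    (hlam1 : 0 < lam1) (hlam2 : 0 < lam2)
    (obj : (Fin g → ℝ) → ℝ)
    (hobj : obj = fun z => (1/2) * (∑ i, (z i - w i) ^ 2) + lam2 * l2norm z + lam1 * l1norm z)
    (h : Fin g → ℝ)
    (hh : h = fun i => Real.sign (w i) * max 0 (|w i| - lam1))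
    (zstar : Fin g → ℝ)
    (hz1 : l2norm h > 0 → zstar = fun i => (max 0 (l2norm h - lam2) / l2norm h) * h i)
    (hz2 : h = 0 → zstar = 0) :
    ∀ z : Fin g → ℝ, obj zstar ≤ obj z := by
  intro z
  -- componentwise facts about soft thresholding
  have key1 : ∀ i, (w i - h i) * h i = lam1 * |h i| := by
    intro i
    simp only [hh]
    rcases le_or_gt (|w i|) lam1 with hle | hgt
    · rw [max_eq_left (by linarith)]; ring_nf; simp
    · rw [max_eq_right (by linarith)]
      rcases lt_trichotomy (w i) 0 with hw | hw | hw
      · rw [Real.sign_of_neg hw]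
        rw [abs_of_neg hw] at hgt ⊢
        rw [abs_of_nonpos (by nlinarith)]
        ring
      · simp [hw] at hgt; linarith
      · rw [Real.sign_of_pos hw]
        rw [abs_of_pos hw] at hgt ⊢
        rw [abs_of_nonneg (by nlinarith)]
        ring
  have key2 : ∀ i, |w i - h i| ≤ lam1 := by
    intro i
    simp only [hh]
    rcases le_or_gt (|w i|) lam1 with hle | hgt
    · rw [max_eq_left (by linarith)]
      simpa using hle
    · rw [max_eq_right (by linarith)]
      rcases lt_trichotomy (w i) 0 with hw | hw | hw
      · rw [Real.sign_of_neg hw]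
        rw [abs_of_neg hw] at hgt ⊢
        rw [show w i - -1 * (-w i - lam1) = -lam1 by ring, abs_neg, abs_of_pos hlam1]
      · simp [hw] at hgt; linarith
      · rw [Real.sign_of_pos hw]
        rw [abs_of_pos hw] at hgt ⊢
        rw [show w i - 1 * (w i - lam1) = lam1 by ring, abs_of_pos hlam1]
  set r := l2norm h with hrdef
  set t := l2norm z with htdef
  have hr0 : 0 ≤ r := Real.sqrt_nonneg _
  have ht0 : 0 ≤ t := Real.sqrt_nonneg _
  have ht2 : t ^ 2 = ∑ i, z i ^ 2 := Real.sq_sqrt (by positivity)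
  have hr2 : r ^ 2 = ∑ i, h i ^ 2 := Real.sq_sqrt (by positivity)
  have cauchy : ∑ i, z i * h i ≤ t * r := by
    calc ∑ i, z i * h i ≤ |∑ i, z i * h i| := le_abs_self _
    _ = Real.sqrt ((∑ i, z i * h i) ^ 2) := (Real.sqrt_sq_eq_abs _).symm
    _ ≤ Real.sqrt ((∑ i, z i ^ 2) * ∑ i, h i ^ 2) :=
        Real.sqrt_le_sqrt (Finset.sum_mul_sq_le_sq_mul_sq _ _ _)
    _ = t * r := by rw [Real.sqrt_mul (by positivity)]; rw [htdef, hrdef]; rfl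
  set s := max 0 (r - lam2) with hsdef
  have hs0 : 0 ≤ s := le_max_left _ _
  set L := l1norm h with hLdef
  set C := (1/2) * ∑ i, (h i - w i) ^ 2 with hCdef
  have hwh : ∑ i, (w i - h i) * h i = lam1 * L := by
    rw [hLdef, l1norm, Finset.mul_sum]
    exact Finset.sum_congr rfl fun i _ => key1 i
  -- lower bound for obj z
  have sumineq : ∑ i, ((1/2) * (z i - h i) ^ 2 + ((1/2) * (h i - w i) ^ 2 + lam1 * |h i|))
      ≤ ∑ i, ((1/2) * (z i - w i) ^ 2 + lam1 * |z i|) := by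
    apply Finset.sum_le_sum
    intro i _
    have k1 := key1 i
    have hz : (w i - h i) * z i ≤ lam1 * |z i| := by
      calc (w i - h i) * z i ≤ |(w i - h i) * z i| := le_abs_self _
      _ = |w i - h i| * |z i| := abs_mul _ _
      _ ≤ lam1 * |z i| := mul_le_mul_of_nonneg_right (key2 i) (abs_nonneg _)
    nlinarith [sq_nonneg (z i - h i)]
  have e1 : obj z = ∑ i, ((1/2) * (z i - w i) ^ 2 + lam1 * |z i|) + lam2 * t := by
    rw [hobj]
    simp only [l1norm]
    rw [Finset.sum_add_distrib, ← Finset.mul_sum, ← Finset.mul_sum, ← htdef]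
    ring
  have ee : ∑ i, (z i - h i) ^ 2 = ∑ i, z i ^ 2 - 2 * ∑ i, z i * h i + ∑ i, h i ^ 2 := by
    rw [show ∑ i, (z i - h i) ^ 2 = ∑ i, (z i ^ 2 - 2 * (z i * h i) + h i ^ 2) from
      Finset.sum_congr rfl fun i _ => by ring]
    rw [Finset.sum_add_distrib, Finset.sum_sub_distrib, Finset.mul_sum]
  have e2 : ∑ i, ((1/2) * (z i - h i) ^ 2 + ((1/2) * (h i - w i) ^ 2 + lam1 * |h i|))
      = (1/2) * (t ^ 2 - 2 * (∑ i, z i * h i) + r ^ 2) + C + lam1 * L := by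
    rw [Finset.sum_add_distrib, Finset.sum_add_distrib, ← Finset.mul_sum, ← Finset.mul_sum,
      ← Finset.mul_sum, ee, ht2, hr2, hCdef, hLdef, l1norm]
    ring
  have lower : (1/2) * s ^ 2 - s * r + (1/2) * r ^ 2 + lam2 * s + C + lam1 * L ≤ obj z := by
    have scal : (1/2) * s ^ 2 - s * r + (1/2) * r ^ 2 + lam2 * s
        ≤ (1/2) * (t ^ 2 - 2 * (t * r) + r ^ 2) + lam2 * t := by
      rcases le_or_gt r lam2 with hc | hc
      · have hs' : s = 0 := max_eq_left (by linarith)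
        rw [hs']
        nlinarith [sq_nonneg (t - r)]
      · have hs' : s = r - lam2 := max_eq_right (by linarith)
        rw [hs']
        nlinarith [sq_nonneg (t - (r - lam2))]
    calc (1/2) * s ^ 2 - s * r + (1/2) * r ^ 2 + lam2 * s + C + lam1 * L
        ≤ (1/2) * (t ^ 2 - 2 * (t * r) + r ^ 2) + lam2 * t + C + lam1 * L := by linarith
      _ ≤ (1/2) * (t ^ 2 - 2 * (∑ i, z i * h i) + r ^ 2) + lam2 * t + C + lam1 * L := by
          linarith [cauchy]
      _ = ∑ i, ((1/2) * (z i - h i) ^ 2 + ((1/2) * (h i - w i) ^ 2 + lam1 * |h i|)) + lam2 * t := by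
          rw [e2]; ring
      _ ≤ ∑ i, ((1/2) * (z i - w i) ^ 2 + lam1 * |z i|) + lam2 * t := by linarith [sumineq]
      _ = obj z := e1.symm
  -- value at zstar
  have upper : obj zstar = (1/2) * s ^ 2 - s * r + (1/2) * r ^ 2 + lam2 * s + C + lam1 * L := by
    rcases lt_or_ge 0 r with rpos | rnonpos
    · have hzs := hz1 rpos
      set c := s / r with hcdef
      have hc0 : 0 ≤ c := div_nonneg hs0 hr0
      have hcr : c * r = s := div_mul_cancel₀ _ (ne_of_gt rpos)
      have f1 : l1norm zstar = c * L := by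
        rw [hLdef]
        simp only [hzs, l1norm, abs_mul, abs_of_nonneg hc0, Finset.mul_sum]
      have f2 : l2norm zstar = c * r := by
        simp only [hzs, l2norm]
        rw [show ∑ i, (c * h i) ^ 2 = c ^ 2 * ∑ i, h i ^ 2 from by
          rw [Finset.mul_sum]; exact Finset.sum_congr rfl fun i _ => by ring]
        rw [Real.sqrt_mul (sq_nonneg c), Real.sqrt_sq hc0, ← hr2, Real.sqrt_sq hr0]
      have f3 : ∑ i, (zstar i - w i) ^ 2
          = (c - 1) ^ 2 * r ^ 2 - 2 * (c - 1) * (lam1 * L) + 2 * C := by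
        simp only [hzs]
        rw [show ∑ i, (c * h i - w i) ^ 2
            = ∑ i, ((c - 1) ^ 2 * h i ^ 2 - 2 * (c - 1) * ((w i - h i) * h i) + (h i - w i) ^ 2)
          from Finset.sum_congr rfl fun i _ => by ring]
        rw [Finset.sum_add_distrib, Finset.sum_sub_distrib, ← Finset.mul_sum, ← Finset.mul_sum,
          hwh, ← hr2, hCdef]
        ring
      rw [hobj]
      simp only
      rw [f3, f2, f1, ← hcr]
      ring
    · have hr : r = 0 := le_antisymm rnonpos hr0
      have hsum : ∑ i, h i ^ 2 = 0 := by rw [← hr2, hr]; ring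
      have hzero : h = 0 := by
        funext i
        have h0 : h i ^ 2 = 0 :=
          (Finset.sum_eq_zero_iff_of_nonneg (fun j _ => sq_nonneg (h j))).mp hsum i
            (Finset.mem_univ i)
        simpa using pow_eq_zero_iff (n := 2) (by norm_num) |>.mp h0
      have hzs := hz2 hzero
      have hs : s = 0 := max_eq_left (by rw [hr]; linarith)
      have hL : L = 0 := by simp [hLdef, l1norm, hzero]
      rw [hobj, hzs, hs, hr, hL]
      simp only [Pi.zero_apply]
      rw [show l2norm (0 : Fin g → ℝ) = 0 from by simp [l2norm]]
      rw [show l1norm (0 : Fin g → ℝ) = 0 from by simp [l1norm]]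
      rw [show ∑ i, ((0:ℝ) - w i) ^ 2 = ∑ i, (h i - w i) ^ 2 from
        Finset.sum_congr rfl fun i _ => by rw [hzero]; simp]
      rw [hCdef]
      ring
  linarith
end

section
/- Let z* ≠ 0 minimize z ↦ (1/2)‖z − w‖₂² + λ₂‖z‖₂ + λ₁‖z‖₁ over ℝ^g, and let h be the soft-thresholding of w with threshold λ₁, h_i = sgn(w_i)·max{0, |w_i| − λ₁}. Then ‖z*‖₂ = ‖h‖₂ − λ₂; in particular ‖h‖₂ > λ₂. -/
/-!
Away from the origin the smooth part `½‖z - w‖₂² + λ₂‖z‖₂` has gradient `t z* - w` at `z*`,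
where `t = 1 + λ₂ / ‖z*‖₂`, so minimality of `z*` gives the subgradient inclusion
`w - t z* ∈ λ₁ ∂‖z*‖₁`. This inclusion splits over the coordinates, and for one coordinate it says
precisely that `t z*ᵢ` is the soft-thresholding of `wᵢ`. Hence `h = t z*` and
`‖h‖₂ = t ‖z*‖₂ = ‖z*‖₂ + λ₂`.
-/

open Set

/-- First-order optimality for a sum `φ + ψ` with `ψ` convex: `-d` is a subgradient of `ψ` at `x`
in the direction of `y`, where `d` is the derivative of `φ` at `x` along `y - x`. -/
theorem ConvexOn.le_add_of_isMinOn_add {E : Type*} [AddCommGroup E] [Module ℝ E]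
    {φ ψ : E → ℝ} {x y : E} {d : ℝ} (hψ : ConvexOn ℝ univ ψ) (hmin : IsMinOn (φ + ψ) univ x)
    (hd : HasDerivAt (fun τ : ℝ => φ (x + τ • (y - x))) d 0) :
    ψ x ≤ ψ y + d := by
  set G : ℝ → ℝ := fun τ => φ (x + τ • (y - x)) + (ψ x + τ * (ψ y - ψ x))
  have hG : HasDerivAt G (d + (ψ y - ψ x)) 0 :=
    hd.add ((hasDerivAt_mul_const (ψ y - ψ x)).const_add (ψ x))
  -- `G` lies above `φ + ψ` on the segment from `x` to `y` and agrees with it at `x`.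
  have hGmin : IsLocalMinOn G (Icc 0 1) 0 := by
    refine Filter.eventually_of_mem self_mem_nhdsWithin fun τ hτ => ?_
    have hconv : ψ (x + τ • (y - x)) ≤ ψ x + τ * (ψ y - ψ x) := by
      have := hψ.2 (mem_univ x) (mem_univ y) (sub_nonneg.2 hτ.2) hτ.1 (sub_add_cancel 1 τ)
      rw [show x + τ • (y - x) = (1 - τ) • x + τ • y by module]
      simp only [smul_eq_mul] at this
      linarith
    have := hmin (mem_univ (x + τ • (y - x)))
    simp only [mem_ofPred_eq, Pi.add_apply] at this
    simp only [G, zero_smul, add_zero, zero_mul]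
    linarith
  have h1 : (1 : ℝ) ∈ posTangentConeAt (Icc 0 1) 0 :=
    mem_posTangentConeAt_of_segment_subset (by simp [segment_eq_Icc])
  have := hGmin.hasFDerivWithinAt_nonneg hG.hasFDerivAt.hasFDerivWithinAt h1
  simp only [ContinuousLinearMap.toSpanSingleton_apply, smul_eq_mul, one_mul] at this
  linarith

theorem hasDerivAt_sum_sq_add_mul {ι : Type*} (s : Finset ι) (u v : ι → ℝ) :
    HasDerivAt (fun τ : ℝ => ∑ j ∈ s, (u j + τ * v j) ^ 2) (2 * ∑ j ∈ s, u j * v j) 0 := by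
  rw [Finset.mul_sum]
  refine HasDerivAt.fun_sum fun j _ => ?_
  exact (((hasDerivAt_mul_const (v j)).const_add (u j)).fun_pow 2).congr_deriv (by
    simp only [Nat.cast_ofNat, zero_mul, add_zero, Nat.add_one_sub_one, pow_one]; ring)

theorem Fintype.sum_apply_update_sub {ι : Type*} [Fintype ι] [DecidableEq ι] (F : ι → ℝ → ℝ)
    (z : ι → ℝ) (i : ι) (s : ℝ) :
    ∑ j, F j (Function.update z i s j) - ∑ j, F j (z j) = F i s - F i (z i) := by
  rw [← Finset.sum_sub_distrib, Finset.sum_eq_single i (fun j _ hj => by simp [hj]) (by simp)]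
  simp

theorem abs_le_and_mul_eq_of_abs_subgradient {lam x c : ℝ} (hlam : 0 ≤ lam)
    (h : ∀ s, lam * |x| + c * (s - x) ≤ lam * |s|) : |c| ≤ lam ∧ c * x = lam * |x| := by
  -- Testing at `x ± 1` bounds `|c|`; testing at `0` and `2x` pins down `c * x`.
  have hright := h (x + 1)
  have hleft := h (x - 1)
  have hzero := h 0
  have htwice := h (2 * x)
  have hr : lam * |x + 1| ≤ lam * (|x| + 1) :=
    mul_le_mul_of_nonneg_left ((abs_add_le x 1).trans_eq (by rw [abs_one])) hlam
  have hl : lam * |x - 1| ≤ lam * (|x| + 1) :=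
    mul_le_mul_of_nonneg_left ((abs_sub x 1).trans_eq (by rw [abs_one])) hlam
  rw [abs_zero] at hzero
  rw [abs_mul, abs_two] at htwice
  exact ⟨abs_le.2 ⟨by linarith, by linarith⟩, by linarith⟩

noncomputable def softThreshold (lam a : ℝ) : ℝ := Real.sign a * max 0 (|a| - lam)

theorem mul_eq_softThreshold_of_abs_subgradient {lam a t x : ℝ} (hlam : 0 ≤ lam) (ht : 0 < t)
    (h : ∀ s, lam * |x| + (a - t * x) * (s - x) ≤ lam * |s|) :
    t * x = softThreshold lam a := by
  obtain ⟨hle, heq⟩ := abs_le_and_mul_eq_of_abs_subgradient hlam h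
  rcases lt_trichotomy x 0 with hx | rfl | hx
  · have ha : a - t * x = -lam := by
      rw [abs_of_neg hx] at heq
      exact mul_right_cancel₀ hx.ne (by linarith)
    have hneg : a < 0 := by nlinarith
    rw [softThreshold, Real.sign_of_neg hneg, abs_of_neg hneg, max_eq_right (by nlinarith)]
    linarith
  · rw [softThreshold, mul_zero, max_eq_left (by simpa using hle), mul_zero]
  · have ha : a - t * x = lam := by
      rw [abs_of_pos hx] at heq
      exact mul_right_cancel₀ hx.ne' heq
    have hpos : 0 < a := by nlinarith
    rw [softThreshold, Real.sign_of_pos hpos, abs_of_pos hpos, max_eq_right (by nlinarith)]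
    linarith

section Norms

variable {g : ℕ}

theorem convexOn_l1norm : ConvexOn ℝ univ (l1norm : (Fin g → ℝ) → ℝ) := by
  refine ⟨convex_univ, fun x _ y _ a b ha hb _ => ?_⟩
  simp only [l1norm, Pi.add_apply, Pi.smul_apply, smul_eq_mul, Finset.mul_sum,
    ← Finset.sum_add_distrib]
  refine Finset.sum_le_sum fun j _ => (abs_add_le _ _).trans_eq ?_
  rw [abs_mul, abs_mul, abs_of_nonneg ha, abs_of_nonneg hb]

theorem l2norm_pos {z : Fin g → ℝ} (hz : z ≠ 0) : 0 < l2norm z := by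
  obtain ⟨i, hi⟩ := Function.ne_iff.mp hz
  exact Real.sqrt_pos.2 <|
    Finset.sum_pos' (fun j _ => sq_nonneg _) ⟨i, Finset.mem_univ i, pow_two_pos_of_ne_zero hi⟩

theorem l2norm_smul (t : ℝ) (z : Fin g → ℝ) : l2norm (t • z) = |t| * l2norm z := by
  simp only [l2norm, Pi.smul_apply, smul_eq_mul, mul_pow, ← Finset.mul_sum]
  rw [Real.sqrt_mul (sq_nonneg t), Real.sqrt_sq_eq_abs]

theorem hasDerivAt_l2norm_add_smul {z : Fin g → ℝ} (hz : z ≠ 0) (v : Fin g → ℝ) :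
    HasDerivAt (fun τ : ℝ => l2norm (z + τ • v)) ((∑ j, z j * v j) / l2norm z) 0 := by
  have := (hasDerivAt_sum_sq_add_mul Finset.univ z v).sqrt
    (by simpa using (Real.sqrt_pos.1 (l2norm_pos hz)).ne')
  simp only [l2norm, Pi.add_apply, Pi.smul_apply, smul_eq_mul]
  convert this using 1
  simp only [zero_mul, add_zero]
  ring

/-- The optimality condition `w - (1 + λ₂/‖z‖₂) z ∈ λ₁ ∂‖z‖₁`, as a subgradient inequality. -/
theorem hilasso_subgradient_le {w z : Fin g → ℝ} {lam1 lam2 : ℝ} (hlam1 : 0 ≤ lam1)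
    (hz : z ≠ 0)
    (hmin : ∀ y : Fin g → ℝ, (1/2) * (∑ i, (z i - w i) ^ 2) + lam2 * l2norm z + lam1 * l1norm z
      ≤ (1/2) * (∑ i, (y i - w i) ^ 2) + lam2 * l2norm y + lam1 * l1norm y)
    (y : Fin g → ℝ) :
    lam1 * l1norm z + ∑ j, (w j - (1 + lam2 / l2norm z) * z j) * (y j - z j)
      ≤ lam1 * l1norm y := by
  have hd : HasDerivAt (fun τ : ℝ => (1/2) * (∑ i, ((z + τ • (y - z)) i - w i) ^ 2)
      + lam2 * l2norm (z + τ • (y - z)))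
      (∑ j, ((1 + lam2 / l2norm z) * z j - w j) * (y j - z j)) 0 := by
    have hsq := (hasDerivAt_sum_sq_add_mul Finset.univ (z - w) (y - z)).const_mul (1/2 : ℝ)
    have hl2 := (hasDerivAt_l2norm_add_smul hz (y - z)).const_mul lam2
    refine ((hsq.add hl2).congr_deriv ?_).congr_of_eventuallyEq (.of_forall fun τ => ?_)
    · simp only [Pi.sub_apply, Finset.mul_sum, Finset.sum_div, ← Finset.sum_add_distrib]
      exact Finset.sum_congr rfl fun j _ => by ring
    · simp only [Pi.add_apply, Pi.smul_apply, Pi.sub_apply, smul_eq_mul]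
      congr 3 with j
      ring
  have := ConvexOn.le_add_of_isMinOn_add
    (φ := fun y => (1/2) * (∑ i, (y i - w i) ^ 2) + lam2 * l2norm y)
    (ψ := fun y => lam1 * l1norm y) (convexOn_l1norm.smul hlam1) (fun y _ => hmin y) hd
  have hsum : ∑ j, (w j - (1 + lam2 / l2norm z) * z j) * (y j - z j)
      = -∑ j, ((1 + lam2 / l2norm z) * z j - w j) * (y j - z j) := by
    rw [← Finset.sum_neg_distrib]
    exact Finset.sum_congr rfl fun j _ => by ring
  linarith

theorem abs_subgradient_of_l1norm_subgradient {lam : ℝ} {c z : Fin g → ℝ}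
    (h : ∀ y, lam * l1norm z + ∑ j, c j * (y j - z j) ≤ lam * l1norm y) (i : Fin g) (s : ℝ) :
    lam * |z i| + c i * (s - z i) ≤ lam * |s| := by
  have hy := h (Function.update z i s)
  have hl1 := Fintype.sum_apply_update_sub (fun _ t => |t|) z i s
  have hc := Fintype.sum_apply_update_sub (fun j t => c j * (t - z j)) z i s
  simp only [sub_self, mul_zero, Finset.sum_const_zero, sub_zero] at hc
  rw [l1norm, l1norm, hc] at hy
  linear_combination hy + lam * hl1

end Norms

/-- If a nonzero `zstar` minimizes the HiLasso proximal objective, then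
`‖zstar‖₂ = ‖h‖₂ − λ₂`, where `h` is the soft-thresholding of `w`; in particular
`‖h‖₂ > λ₂`. -/
theorem hilasso_prox_nonzero_norm {g : ℕ} (w : Fin g → ℝ) (lam1 lam2 : ℝ)
    (hlam1 : 0 < lam1) (hlam2 : 0 < lam2)
    (obj : (Fin g → ℝ) → ℝ)
    (hobj : obj = fun z => (1/2) * (∑ i, (z i - w i) ^ 2) + lam2 * l2norm z + lam1 * l1norm z)
    (h : Fin g → ℝ)
    (hh : h = fun i => Real.sign (w i) * max 0 (|w i| - lam1))
    (zstar : Fin g → ℝ) (hzne : zstar ≠ 0)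
    (hmin : ∀ z : Fin g → ℝ, obj zstar ≤ obj z) :
    l2norm zstar = l2norm h - lam2 ∧ l2norm h > lam2 := by
  subst hobj
  have hN := l2norm_pos hzne
  have ht : 0 < 1 + lam2 / l2norm zstar := by positivity
  have hsub := hilasso_subgradient_le hlam1.le hzne hmin
  have hh_smul : h = (1 + lam2 / l2norm zstar) • zstar := by
    rw [hh]
    ext i
    exact (mul_eq_softThreshold_of_abs_subgradient hlam1.le ht
      (abs_subgradient_of_l1norm_subgradient hsub i)).symm
  have hnorm : l2norm h = l2norm zstar + lam2 := by
    rw [hh_smul, l2norm_smul, abs_of_pos ht, add_mul, one_mul, div_mul_cancel₀ _ hN.ne']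
  constructor <;> linarith
end

section
/- If ‖h‖₂ ≤ λ₂, where h is the soft-thresholding of w with threshold λ₁ (h_i = sgn(w_i)·max{0,|w_i| − λ₁}), then z = 0 is the minimizer of z ↦ (1/2)‖z − w‖₂² + λ₂‖z‖₂ + λ₁‖z‖₁ over ℝ^g. -/
/-- If `‖h‖₂ ≤ λ₂` for the soft-thresholding `h` of `w`, then `z = 0` minimizes the
HiLasso proximal objective. -/
theorem hilasso_prox_zero_solution {g : ℕ} (w : Fin g → ℝ) (lam1 lam2 : ℝ)
    (hlam1 : 0 < lam1) (hlam2 : 0 < lam2)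
    (obj : (Fin g → ℝ) → ℝ)
    (hobj : obj = fun z => (1/2) * (∑ i, (z i - w i) ^ 2) + lam2 * l2norm z + lam1 * l1norm z)
    (h : Fin g → ℝ)
    (hh : h = fun i => Real.sign (w i) * max 0 (|w i| - lam1))
    (hle : l2norm h ≤ lam2) :
    ∀ z : Fin g → ℝ, obj (0 : Fin g → ℝ) ≤ obj z := by
  intro z
  subst hobj
  simp only
  have habs : ∀ i, |h i| = max 0 (|w i| - lam1) := by
    intro i
    rw [hh]; simp only
    rcases lt_trichotomy (w i) 0 with hw | hw | hw
    · rw [Real.sign_of_neg hw, neg_one_mul, abs_neg, abs_of_nonneg (le_max_left 0 _)]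
    · simp only [hw, Real.sign_zero, zero_mul, abs_zero, abs_zero]
      rw [eq_comm, max_eq_left]; linarith
    · rw [Real.sign_of_pos hw, one_mul, abs_of_nonneg (le_max_left 0 _)]
  -- Cauchy-Schwarz
  have hzA : (0:ℝ) ≤ ∑ i, z i ^ 2 := Finset.sum_nonneg fun i _ => sq_nonneg _
  have hSnn : (0:ℝ) ≤ ∑ i, |z i| * |h i| :=
    Finset.sum_nonneg fun i _ => mul_nonneg (abs_nonneg _) (abs_nonneg _)
  have hCS : ∑ i, |z i| * |h i| ≤ l2norm z * l2norm h := by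
    have h1 : (∑ i, |z i| * |h i|) ^ 2 ≤ (∑ i, |z i| ^ 2) * ∑ i, |h i| ^ 2 :=
      Finset.sum_mul_sq_le_sq_mul_sq _ _ _
    simp only [sq_abs] at h1
    have h2 : ∑ i, |z i| * |h i| ≤ Real.sqrt ((∑ i, z i ^ 2) * ∑ i, h i ^ 2) := by
      rw [Real.le_sqrt hSnn]
      · exact h1
      · exact mul_nonneg hzA (Finset.sum_nonneg fun i _ => sq_nonneg _)
    rwa [Real.sqrt_mul hzA] at h2
  have hCS2 : ∑ i, |z i| * |h i| ≤ lam2 * l2norm z := by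
    calc ∑ i, |z i| * |h i| ≤ l2norm z * l2norm h := hCS
    _ ≤ l2norm z * lam2 := by
        apply mul_le_mul_of_nonneg_left hle (Real.sqrt_nonneg _)
    _ = lam2 * l2norm z := mul_comm _ _
  have hzw : ∑ i, z i * w i ≤ ∑ i, (|z i| * |h i| + lam1 * |z i|) := by
    apply Finset.sum_le_sum
    intro i _
    have h1 : z i * w i ≤ |z i| * |w i| := by
      calc z i * w i ≤ |z i * w i| := le_abs_self _
      _ = |z i| * |w i| := abs_mul _ _
    have h2 : |w i| ≤ |h i| + lam1 := by
      rw [habs i]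
      have := le_max_right 0 (|w i| - lam1)
      linarith
    calc z i * w i ≤ |z i| * (|h i| + lam1) :=
          h1.trans (mul_le_mul_of_nonneg_left h2 (abs_nonneg _))
    _ = |z i| * |h i| + lam1 * |z i| := by ring
  rw [Finset.sum_add_distrib, ← Finset.mul_sum] at hzw
  -- expand squares
  have hexp : ∑ i, (z i - w i) ^ 2 = ∑ i, z i ^ 2 - 2 * ∑ i, z i * w i + ∑ i, w i ^ 2 := by
    have e : ∀ i : Fin g, (z i - w i) ^ 2 = z i ^ 2 - 2 * (z i * w i) + w i ^ 2 :=
      fun i => by ring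
    simp_rw [e, Finset.sum_add_distrib, Finset.sum_sub_distrib, ← Finset.mul_sum]
  have h0 : ∑ i, ((0 : Fin g → ℝ) i - w i) ^ 2 = ∑ i, w i ^ 2 := by
    apply Finset.sum_congr rfl; intro i _; simp
  have hl20 : l2norm (0 : Fin g → ℝ) = 0 := by
    simp [l2norm]
  have hl10 : l1norm (0 : Fin g → ℝ) = 0 := by
    simp [l1norm]
  rw [hl20, hl10, h0, hexp]
  unfold l1norm
  nlinarith [hCS2, hzw, hzA]
end

section
/- Let D be an m×p real matrix with unit-norm columns, partitioned into q groups of columns each of size g. Then the sparse block coherence μ_B^{ss} satisfies 0 ≤ μ_B^{ss} ≤ (s/g)·μ, where μ is the standard coherence of D. -/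
/- Every entry of an off-diagonal block `D_Gᵀ D_F` is an inner product of two distinct columns,
hence bounded by `μ` in absolute value. For a matrix `Z` with entries bounded by `c`,
`|uᵀ Z v| ≤ c ‖u‖₁ ‖v‖₁`, and by Cauchy–Schwarz on the support an `s`-sparse unit vector has
`‖u‖₁ ≤ √s`; so `ρ^{ss}(D_Gᵀ D_F) ≤ s μ`. -/

noncomputable def l2 {α : Type*} [Fintype α] (x : α → ℝ) : ℝ := Real.sqrt (∑ i, x i ^ 2)
noncomputable def l0 {α : Type*} (x : α → ℝ) : ℕ := Nat.card {i // x i ≠ 0}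

/-- Largest `s`-sparse singular value of `Z`. -/
noncomputable def rhoSS {α β : Type*} [Fintype α] [Fintype β]
    (s : ℕ) (Z : Matrix α β ℝ) : ℝ :=
  sSup {x | ∃ u : α → ℝ, ∃ v : β → ℝ,
    l2 u = 1 ∧ l2 v = 1 ∧ l0 u ≤ s ∧ l0 v ≤ s ∧ x = |dotProduct u (Z.mulVec v)|}

/-- The submatrix `D_Gᵀ D_F` of the Gram matrix for groups `G, F`. -/
noncomputable def gram {m q g : ℕ} (D : Matrix (Fin m) (Fin q × Fin g) ℝ)
    (G F : Fin q) : Matrix (Fin g) (Fin g) ℝ :=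
  fun a b => ∑ i, D i (G, a) * D i (F, b)

/-- Standard coherence of `D`. -/
noncomputable def coh {m q g : ℕ} (D : Matrix (Fin m) (Fin q × Fin g) ℝ) : ℝ :=
  sSup {x | ∃ i j : Fin q × Fin g, i ≠ j ∧ x = |∑ r, D r i * D r j|}

/-- The sparse block coherence `μ_B^{ss}`. -/
noncomputable def muBss {m q g : ℕ} (s : ℕ) (D : Matrix (Fin m) (Fin q × Fin g) ℝ) : ℝ :=
  sSup {x | ∃ G F : Fin q, G ≠ F ∧ x = (1 / (g : ℝ)) * rhoSS s (gram D G F)}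

section Sparse

open Matrix

variable {α β : Type*} [Fintype α] [Fintype β]

lemma sum_abs_le_sqrt_l0_mul_l2 (u : α → ℝ) : ∑ i, |u i| ≤ Real.sqrt (l0 u) * l2 u := by
  classical
  set T := Finset.univ.filter fun i => u i ≠ 0
  have hcard : (T.card : ℝ) = l0 u := by
    simp only [T, l0, Nat.card_eq_fintype_card, Fintype.card_subtype]
  have hsupport : ∑ i, |u i| = ∑ i ∈ T, |u i| * 1 := by
    rw [Finset.sum_filter]
    refine Finset.sum_congr rfl fun i _ => ?_
    by_cases h : u i = 0 <;> simp [h]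
  have hsq : ∑ i ∈ T, |u i| ^ 2 ≤ ∑ i, u i ^ 2 := by
    simp_rw [sq_abs]
    exact Finset.sum_le_sum_of_subset_of_nonneg (Finset.filter_subset _ _)
      fun i _ _ => sq_nonneg _
  rw [hsupport, l2, ← Real.sqrt_mul (Nat.cast_nonneg _)]
  refine Real.le_sqrt_of_sq_le ?_
  calc (∑ i ∈ T, |u i| * 1) ^ 2 ≤ (∑ i ∈ T, |u i| ^ 2) * ∑ _i ∈ T, (1 : ℝ) ^ 2 :=
        Finset.sum_mul_sq_le_sq_mul_sq T _ _
    _ ≤ (∑ i, u i ^ 2) * l0 u := by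
        rw [← hcard]
        simp only [one_pow, Finset.sum_const, nsmul_eq_mul, mul_one]
        exact mul_le_mul_of_nonneg_right hsq (Nat.cast_nonneg _)
    _ = l0 u * ∑ i, u i ^ 2 := mul_comm _ _

lemma sum_abs_le_sqrt_of_sparse_unit {u : α → ℝ} {s : ℕ} (h2 : l2 u = 1) (h0 : l0 u ≤ s) :
    ∑ i, |u i| ≤ Real.sqrt s := by
  calc ∑ i, |u i| ≤ Real.sqrt (l0 u) * l2 u := sum_abs_le_sqrt_l0_mul_l2 u
    _ ≤ Real.sqrt s := by
        rw [h2, mul_one]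
        exact Real.sqrt_le_sqrt (by exact_mod_cast h0)

lemma abs_dotProduct_mulVec_le {Z : Matrix α β ℝ} {c : ℝ} (hZ : ∀ a b, |Z a b| ≤ c)
    (u : α → ℝ) (v : β → ℝ) :
    |u ⬝ᵥ Z *ᵥ v| ≤ (∑ a, |u a|) * (∑ b, |v b|) * c := by
  have hexpand : u ⬝ᵥ Z *ᵥ v = ∑ a, ∑ b, u a * Z a b * v b := by
    simp only [dotProduct, Matrix.mulVec, Finset.mul_sum, mul_assoc]
  rw [hexpand, Finset.sum_mul_sum, Finset.sum_mul]
  refine (Finset.abs_sum_le_sum_abs _ _).trans (Finset.sum_le_sum fun a _ => ?_)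
  rw [Finset.sum_mul]
  refine (Finset.abs_sum_le_sum_abs _ _).trans (Finset.sum_le_sum fun b _ => ?_)
  rw [abs_mul, abs_mul, mul_right_comm]
  exact mul_le_mul_of_nonneg_left (hZ a b) (mul_nonneg (abs_nonneg _) (abs_nonneg _))

lemma rhoSS_nonneg (s : ℕ) (Z : Matrix α β ℝ) : 0 ≤ rhoSS s Z :=
  Real.sSup_nonneg fun _ ⟨_, _, _, _, _, _, hx⟩ => hx ▸ abs_nonneg _

lemma rhoSS_le_mul_of_abs_le {s : ℕ} {Z : Matrix α β ℝ} {c : ℝ} (hc : 0 ≤ c)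
    (hZ : ∀ a b, |Z a b| ≤ c) : rhoSS s Z ≤ s * c := by
  refine Real.sSup_le ?_ (by positivity)
  rintro x ⟨u, v, hu2, hv2, hu0, hv0, rfl⟩
  calc |u ⬝ᵥ Z *ᵥ v| ≤ (∑ a, |u a|) * (∑ b, |v b|) * c := abs_dotProduct_mulVec_le hZ u v
    _ ≤ Real.sqrt s * Real.sqrt s * c := by
        gcongr
        · exact sum_abs_le_sqrt_of_sparse_unit hu2 hu0
        · exact sum_abs_le_sqrt_of_sparse_unit hv2 hv0
    _ = s * c := by rw [Real.mul_self_sqrt (Nat.cast_nonneg _)]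

end Sparse

section Coherence

variable {m q g : ℕ} (D : Matrix (Fin m) (Fin q × Fin g) ℝ)

lemma coh_nonneg : 0 ≤ coh D :=
  Real.sSup_nonneg fun _ ⟨_, _, _, hx⟩ => hx ▸ abs_nonneg _

lemma abs_gram_le_coh {G F : Fin q} (hGF : G ≠ F) (a b : Fin g) : |gram D G F a b| ≤ coh D := by
  have hbdd : BddAbove {x | ∃ i j : Fin q × Fin g, i ≠ j ∧ x = |∑ r, D r i * D r j|} := by
    refine ((Set.finite_range fun p : (Fin q × Fin g) × (Fin q × Fin g) =>
      |∑ r, D r p.1 * D r p.2|).subset ?_).bddAbove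
    rintro x ⟨i, j, _, rfl⟩
    exact ⟨(i, j), rfl⟩
  exact le_csSup hbdd ⟨(G, a), (F, b), by simp [hGF], rfl⟩

lemma muBss_nonneg (s : ℕ) : 0 ≤ muBss s D :=
  Real.sSup_nonneg fun _ ⟨_, _, _, hx⟩ => hx ▸ mul_nonneg (by positivity) (rhoSS_nonneg _ _)

end Coherence

theorem muBss_le_general {m q g s : ℕ} (D : Matrix (Fin m) (Fin q × Fin g) ℝ) :
    0 ≤ muBss s D ∧ muBss s D ≤ ((s : ℝ) / g) * coh D := by
  refine ⟨muBss_nonneg D s, Real.sSup_le ?_ (mul_nonneg (by positivity) (coh_nonneg D))⟩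
  rintro x ⟨G, F, hGF, rfl⟩
  have hrho : rhoSS s (gram D G F) ≤ s * coh D :=
    rhoSS_le_mul_of_abs_le (coh_nonneg D) (abs_gram_le_coh D hGF)
  calc 1 / (g : ℝ) * rhoSS s (gram D G F) ≤ 1 / (g : ℝ) * (s * coh D) := by gcongr
    _ = (s : ℝ) / g * coh D := by ring

/-- Proposition 1, first bound: `0 ≤ μ_B^{ss} ≤ (s/g)·μ`. -/
theorem muBss_le {m q g s : ℕ} (D : Matrix (Fin m) (Fin q × Fin g) ℝ)
    (hunit : ∀ j, ∑ i, D i j ^ 2 = 1) (hs1 : 1 ≤ s) (hsg : s ≤ g) :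
    0 ≤ muBss s D ∧ muBss s D ≤ ((s : ℝ) / g) * coh D :=
  muBss_le_general D
end

section
/- Let W be an m×p real matrix, 𝒢 a partition of the column indices {1,…,p}, and ℰ a partition of the row indices {1,…,m}. For v ∈ ℝ^p define ψ_𝒢(v) = Σ_{G∈𝒢}‖v_G‖₂, and for u ∈ ℝ^m define ψ_ℰ(u) = Σ_{E∈ℰ}‖u_E‖₂. Define ρ_c(W) = max_{G∈𝒢} Σ_{E∈ℰ} ρ(W_{E,G}), where W_{E,G} is the submatrix with rows E and columns G and ρ is the spectral norm. Then for every v ∈ ℝ^p, ψ_ℰ(W v) ≤ ρ_c(W) · ψ_𝒢(v). -/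
/-- Spectral norm of a real matrix. -/
noncomputable def spec {α β : Type*} [Fintype α] [Fintype β] (Z : Matrix α β ℝ) : ℝ :=
  sSup {x | ∃ v : β → ℝ, l2 v = 1 ∧ x = l2 (Z.mulVec v)}

/-- Mixed block norm `ψ` associated to a partition of the index set given by the
block-assignment map `pr`. -/
noncomputable def psiPart {α κ : Type*} [Fintype α] [Fintype κ] [DecidableEq κ]
    (pr : α → κ) (u : α → ℝ) : ℝ :=
  ∑ E : κ, l2 (fun i : {i // pr i = E} => u i.val)

/-- The block spectral norm `ρ_c(W) = max_{G} Σ_{E} ρ(W_{E,G})` with row partition `pr`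
and column partition `pc`. -/
noncomputable def rhoc {α β κ₁ κ₂ : Type*} [Fintype α] [Fintype β]
    [Fintype κ₁] [Fintype κ₂] [DecidableEq κ₁] [DecidableEq κ₂]
    (W : Matrix α β ℝ) (pr : α → κ₁) (pc : β → κ₂) : ℝ :=
  sSup {x | ∃ F : κ₂, x = ∑ E : κ₁,
    spec (W.submatrix (Subtype.val : {i // pr i = E} → α) (Subtype.val : {j // pc j = F} → β))}

/-
Split `v` into its column blocks `v_G`, so that the `E`-block of `W v` is `Σ_G W_{E,G} v_G`.
The triangle inequality and the defining bound of the spectral norm give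
`ψ_ℰ(W v) ≤ Σ_E Σ_G ρ(W_{E,G}) ‖v_G‖₂`; exchanging the sums, each column sum
`Σ_E ρ(W_{E,G})` is at most `ρ_c(W)`.
-/

open Finset Matrix

section L2

variable {α : Type*} [Fintype α]

lemma l2_eq_norm_toLp (x : α → ℝ) : l2 x = ‖WithLp.toLp 2 x‖ := by
  simp [l2, EuclideanSpace.norm_eq]

lemma l2_nonneg (x : α → ℝ) : 0 ≤ l2 x := Real.sqrt_nonneg _

lemma l2_eq_zero {x : α → ℝ} : l2 x = 0 ↔ x = 0 := by
  rw [l2_eq_norm_toLp, norm_eq_zero, WithLp.toLp_eq_zero]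

lemma l2_smul (c : ℝ) (x : α → ℝ) : l2 (c • x) = |c| * l2 x := by
  rw [l2_eq_norm_toLp, l2_eq_norm_toLp, WithLp.toLp_smul, norm_smul, Real.norm_eq_abs]

lemma l2_sum_le {ι : Type*} (s : Finset ι) (f : ι → α → ℝ) :
    l2 (∑ i ∈ s, f i) ≤ ∑ i ∈ s, l2 (f i) := by
  simp only [l2_eq_norm_toLp, WithLp.toLp_sum]
  exact norm_sum_le _ _

end L2

section Spec

variable {α β : Type*} [Fintype α] [Fintype β]

lemma exists_l2_mulVec_le (Z : Matrix α β ℝ) : ∃ C, ∀ u, l2 (Z *ᵥ u) ≤ C * l2 u := by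
  classical
  let f := LinearMap.toContinuousLinearMap (toLpLin 2 2 Z)
  exact ⟨‖f‖, fun u => by simpa [l2_eq_norm_toLp, f] using f.le_opNorm (WithLp.toLp 2 u)⟩

lemma l2_mulVec_le_spec (Z : Matrix α β ℝ) (u : β → ℝ) : l2 (Z *ᵥ u) ≤ spec Z * l2 u := by
  obtain ⟨C, hC⟩ := exists_l2_mulVec_le Z
  have hbdd : BddAbove {x | ∃ v : β → ℝ, l2 v = 1 ∧ x = l2 (Z *ᵥ v)} :=
    ⟨C, by rintro _ ⟨v, hv, rfl⟩; simpa [hv] using hC v⟩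
  rcases (l2_nonneg u).eq_or_lt with hu | hu
  · rw [← hu, mul_zero, l2_eq_zero.1 hu.symm, mulVec_zero, l2_eq_zero.2 rfl]
  have hunit : l2 ((l2 u)⁻¹ • u) = 1 := by
    rw [l2_smul, abs_inv, abs_of_pos hu, inv_mul_cancel₀ hu.ne']
  have hle := le_csSup hbdd ⟨_, hunit, rfl⟩
  rwa [mulVec_smul, l2_smul, abs_inv, abs_of_pos hu, inv_mul_le_iff₀ hu, mul_comm] at hle

end Spec

lemma mulVec_comp_eq_sum_submatrix_mulVec {R α β ι κ : Type*} [CommSemiring R] [Fintype β]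
    [Fintype κ] [DecidableEq κ] (W : Matrix α β R) (r : ι → α) (pc : β → κ) (v : β → R) :
    (fun i => (W *ᵥ v) (r i)) =
      ∑ F, W.submatrix r (Subtype.val : {j // pc j = F} → β) *ᵥ fun j => v j := by
  ext i
  simp only [mulVec, dotProduct, Finset.sum_apply, submatrix_apply]
  exact (Fintype.sum_fiberwise pc _).symm

lemma sum_spec_submatrix_le_rhoc {α β κ₁ κ₂ : Type*} [Fintype α] [Fintype β]
    [Fintype κ₁] [Fintype κ₂] [DecidableEq κ₁] [DecidableEq κ₂]
    (W : Matrix α β ℝ) (pr : α → κ₁) (pc : β → κ₂) (F : κ₂) :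
    ∑ E, spec (W.submatrix (Subtype.val : {i // pr i = E} → α)
      (Subtype.val : {j // pc j = F} → β)) ≤ rhoc W pr pc :=
  le_csSup ((Set.finite_range _).bddAbove.mono <| by rintro _ ⟨G, rfl⟩; exact ⟨G, rfl⟩) ⟨F, rfl⟩

/-- Generalized Lemma 3 of Eldar–Kuppinger–Bölcskei: `ψ_ℰ(W v) ≤ ρ_c(W) · ψ_𝒢(v)`. -/
theorem psiPart_mulVec_le {α β κ₁ κ₂ : Type*} [Fintype α] [Fintype β]
    [Fintype κ₁] [Fintype κ₂] [DecidableEq κ₁] [DecidableEq κ₂]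
    (W : Matrix α β ℝ) (pr : α → κ₁) (pc : β → κ₂) (v : β → ℝ) :
    psiPart pr (W.mulVec v) ≤ rhoc W pr pc * psiPart pc v := by
  set block := fun E F => W.submatrix (Subtype.val : {i // pr i = E} → α)
    (Subtype.val : {j // pc j = F} → β)
  set vBlock := fun F (j : {j // pc j = F}) => v j
  calc psiPart pr (W *ᵥ v) = ∑ E, l2 (∑ F, block E F *ᵥ vBlock F) := by
        simp only [psiPart, mulVec_comp_eq_sum_submatrix_mulVec W _ pc v]; rfl
    _ ≤ ∑ E, ∑ F, spec (block E F) * l2 (vBlock F) :=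
        sum_le_sum fun E _ => (l2_sum_le _ _).trans (sum_le_sum fun F _ => l2_mulVec_le_spec _ _)
    _ = ∑ F, (∑ E, spec (block E F)) * l2 (vBlock F) := by
        rw [sum_comm]; simp only [sum_mul]
    _ ≤ ∑ F, rhoc W pr pc * l2 (vBlock F) :=
        sum_le_sum fun F _ =>
          mul_le_mul_of_nonneg_right (sum_spec_submatrix_le_rhoc W pr pc F) (l2_nonneg _)
    _ = rhoc W pr pc * psiPart pc v := by rw [psiPart, mul_sum]
end

section
/- Under the hypotheses (s−1)ν + s(k−1)χ < 1 (with ν, χ, s, k as in the coherence setup), the matrix D_{S₀}ᵀD_{S₀} is invertible and ‖(D_{S₀}ᵀD_{S₀})^{-1}‖_{1,1} ≤ 1/(1 − (s−1)ν − s(k−1)χ). -/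
/-!
The Gram matrix `G = DᵀD` has unit diagonal, and in each column the coherence bounds control the
off-diagonal entries: `s - 1` of them lie in the column's own block, each at most `ν`, and
`s(k - 1)` in the other blocks, each at most `χ`. So `‖1 - G‖_{1,1} ≤ δ := (s-1)ν + s(k-1)χ < 1`,
and since `‖·‖_{1,1}` is submultiplicative, the Neumann series `∑ (1 - G)ⁿ` converges to `G⁻¹`
with `‖G⁻¹‖_{1,1} ≤ ∑ δⁿ = 1/(1 - δ)`. Mathlib's `linfty` operator norm is the max-row-sum norm,
so the argument is run on transposes.
-/

/-- The `‖·‖_{1,1}` matrix norm: maximum `ℓ¹` norm over columns. -/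
noncomputable def norm11 {α β : Type*} [Fintype α] [Fintype β] (W : Matrix α β ℝ) : ℝ :=
  sSup {x | ∃ j : β, x = ∑ i, |W i j|}

open Finset

theorem norm11_le_of_sum_abs_le {α β : Type*} [Fintype α] [Fintype β] {W : Matrix α β ℝ} {c : ℝ}
    (hc : 0 ≤ c) (h : ∀ j, ∑ i, |W i j| ≤ c) : norm11 W ≤ c :=
  Real.sSup_le (by rintro x ⟨j, rfl⟩; exact h j) hc

section

variable {ι κ : Type*} [Fintype ι] [Fintype κ] [DecidableEq ι]

theorem sum_ite_fst_eq (i₀ : ι) (ν χ : ℝ) :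
    ∑ q : ι × κ, (if q.1 = i₀ then ν else χ) =
      Fintype.card κ * (ν + ((Fintype.card ι : ℝ) - 1) * χ) := by
  have hrow : ∀ i, ∑ _b : κ, (if i = i₀ then ν else χ) =
      Fintype.card κ * (if i = i₀ then ν else χ) := by
    simp
  rw [Fintype.sum_prod_type]
  simp_rw [hrow]
  rw [← mul_sum, ← add_sum_erase _ _ (mem_univ i₀), if_pos rfl,
    sum_congr rfl fun i hi => if_neg (ne_of_mem_erase hi)]
  simp [card_erase_of_mem, Nat.cast_pred (Fintype.card_pos_iff.2 ⟨i₀⟩)]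

theorem sum_erase_le_of_block_bound [DecidableEq κ] (f : ι × κ → ℝ) (p : ι × κ) {ν χ : ℝ}
    (hin : ∀ b, b ≠ p.2 → f (p.1, b) ≤ ν) (hout : ∀ q : ι × κ, q.1 ≠ p.1 → f q ≤ χ) :
    ∑ q ∈ univ.erase p, f q ≤
      ((Fintype.card κ : ℝ) - 1) * ν + Fintype.card κ * ((Fintype.card ι : ℝ) - 1) * χ := by
  have hf : ∀ q ∈ univ.erase p, f q ≤ if q.1 = p.1 then ν else χ := by
    rintro ⟨i, b⟩ hq
    by_cases hi : i = p.1
    · subst hi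
      simpa using hin b fun hb => ne_of_mem_erase hq (by rw [hb])
    · simpa [hi] using hout (i, b) hi
  calc ∑ q ∈ univ.erase p, f q ≤ ∑ q ∈ univ.erase p, if q.1 = p.1 then ν else χ := sum_le_sum hf
    _ = _ := by rw [sum_erase_eq_sub (mem_univ p), sum_ite_fst_eq, if_pos rfl]; ring

end

namespace Matrix

attribute [local instance] Matrix.linftyOpSeminormedAddCommGroup Matrix.linftyOpNormedAddCommGroup
  Matrix.linftyOpSemiNormedRing Matrix.linftyOpNormedRing Matrix.linftyOpNormedSpace

section

variable {m n α : Type*} [Fintype m] [Fintype n]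

theorem sum_norm_le_linfty_opNorm [SeminormedAddCommGroup α] (A : Matrix m n α) (i : m) :
    ∑ j, ‖A i j‖ ≤ ‖A‖ := by
  rw [linfty_opNorm_def]
  simpa only [NNReal.coe_sum, coe_nnnorm] using
    NNReal.coe_le_coe.2 (le_sup (f := fun i => ∑ j, ‖A i j‖₊) (mem_univ i))

theorem linfty_opNorm_le_of_sum_norm_le [SeminormedAddCommGroup α] {A : Matrix m n α} {c : ℝ}
    (hc : 0 ≤ c) (h : ∀ i, ∑ j, ‖A i j‖ ≤ c) : ‖A‖ ≤ c := by
  lift c to NNReal using hc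
  rw [linfty_opNorm_def, NNReal.coe_le_coe]
  exact Finset.sup_le fun i _ => by rw [← NNReal.coe_le_coe, NNReal.coe_sum]; exact h i

theorem norm11_le_linfty_opNorm_transpose (W : Matrix m n ℝ) : norm11 W ≤ ‖Wᵀ‖ :=
  norm11_le_of_sum_abs_le (norm_nonneg _) fun j => sum_norm_le_linfty_opNorm Wᵀ j

theorem linfty_opNorm_one_le [DecidableEq n] [SeminormedRing α] [NormOneClass α] :
    ‖(1 : Matrix n n α)‖ ≤ 1 := by
  cases isEmpty_or_nonempty n
  · simp [Subsingleton.elim (1 : Matrix n n α) 0]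
  · exact norm_one.le

theorem linfty_opNorm_one_sub_le_of_offDiag [DecidableEq n] [SeminormedRing α] {A : Matrix n n α}
    {δ : ℝ} (hδ : 0 ≤ δ) (hdiag : ∀ i, A i i = 1) (hoff : ∀ i, ∑ j ∈ univ.erase i, ‖A i j‖ ≤ δ) :
    ‖1 - A‖ ≤ δ := by
  refine linfty_opNorm_le_of_sum_norm_le hδ fun i => ?_
  calc ∑ j, ‖(1 - A) i j‖ = ∑ j ∈ univ.erase i, ‖A i j‖ := by
        rw [← add_sum_erase _ _ (mem_univ i), sub_apply, one_apply_eq, hdiag, sub_self, norm_zero,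
          zero_add]
        refine sum_congr rfl fun j hj => ?_
        rw [sub_apply, one_apply_ne' (ne_of_mem_erase hj), zero_sub, norm_neg]
    _ ≤ δ := hoff i

variable [DecidableEq n] {𝕜 : Type*} [NontriviallyNormedField 𝕜] [CompleteSpace 𝕜]

theorem isUnit_and_linfty_opNorm_inv_le {A : Matrix n n 𝕜} (h : ‖1 - A‖ < 1) :
    IsUnit A ∧ ‖A⁻¹‖ ≤ (1 - ‖1 - A‖)⁻¹ := by
  -- The instance search does not see that the `linfty` uniformity is the product one.
  have := @instHasSummableGeomSeriesOfCompleteSpace _ _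
    (FiniteDimensional.complete 𝕜 (Matrix n n 𝕜))
  have hA : ((Units.oneSub (1 - A) h : (Matrix n n 𝕜)ˣ) : Matrix n n 𝕜) = A := sub_sub_cancel 1 A
  refine ⟨hA ▸ Units.isUnit _, ?_⟩
  rw [nonsing_inv_eq_ringInverse]
  nth_rw 1 [← sub_sub_cancel 1 A]
  rw [← geom_series_eq_inverse _ h]
  linarith [tsum_geometric_le_of_norm_lt_one _ h, (linfty_opNorm_one_le : ‖(1 : Matrix n n 𝕜)‖ ≤ 1)]

theorem isUnit_and_linfty_opNorm_inv_le_of_offDiag {A : Matrix n n 𝕜} {δ : ℝ} (hδ : δ < 1)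
    (hdiag : ∀ i, A i i = 1) (hoff : ∀ i, ∑ j ∈ univ.erase i, ‖A i j‖ ≤ δ) :
    IsUnit A ∧ ‖A⁻¹‖ ≤ (1 - δ)⁻¹ := by
  cases isEmpty_or_nonempty n
  · refine ⟨isUnit_of_subsingleton A, ?_⟩
    rw [Subsingleton.elim A⁻¹ 0, norm_zero]
    exact inv_nonneg.2 (by linarith)
  · have hδ₀ : 0 ≤ δ := (sum_nonneg fun _ _ => norm_nonneg _).trans (hoff (Classical.arbitrary n))
    have hE := linfty_opNorm_one_sub_le_of_offDiag hδ₀ hdiag hoff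
    obtain ⟨hA, hinv⟩ := isUnit_and_linfty_opNorm_inv_le (hE.trans_lt hδ)
    exact ⟨hA, hinv.trans (inv_anti₀ (by linarith) (by linarith))⟩

theorem isUnit_and_norm11_inv_le {A : Matrix n n ℝ} {δ : ℝ} (hδ : δ < 1) (hdiag : ∀ j, A j j = 1)
    (hoff : ∀ j, ∑ i ∈ univ.erase j, |A i j| ≤ δ) : IsUnit A ∧ norm11 A⁻¹ ≤ (1 - δ)⁻¹ := by
  obtain ⟨hA, hinv⟩ := isUnit_and_linfty_opNorm_inv_le_of_offDiag (A := Aᵀ) hδ hdiag hoff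
  refine ⟨(isUnit_transpose A).1 hA, ?_⟩
  calc norm11 A⁻¹ ≤ ‖A⁻¹ᵀ‖ := norm11_le_linfty_opNorm_transpose _
    _ = ‖Aᵀ⁻¹‖ := by rw [transpose_nonsing_inv]
    _ ≤ (1 - δ)⁻¹ := hinv

end

end Matrix

theorem gram_inv_norm11_bound_general {m k s : ℕ}
    (D : Matrix (Fin m) (Fin k × Fin s) ℝ)
    (hunit : ∀ j, ∑ i, D i j ^ 2 = 1)
    (ν χ : ℝ)
    (hsub : ∀ (i : Fin k) (a b : Fin s), a ≠ b →
      |∑ r, D r (i, a) * D r (i, b)| ≤ ν)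
    (hcross : ∀ (i j : Fin k) (a b : Fin s), i ≠ j →
      |∑ r, D r (i, a) * D r (j, b)| ≤ χ)
    (hlt : ((s : ℝ) - 1) * ν + (s : ℝ) * ((k : ℝ) - 1) * χ < 1) :
    IsUnit (D.transpose * D) ∧
      norm11 (D.transpose * D)⁻¹ ≤
        1 / (1 - ((s : ℝ) - 1) * ν - (s : ℝ) * ((k : ℝ) - 1) * χ) := by
  have hgram : ∀ p q, (D.transpose * D) p q = ∑ r, D r p * D r q := fun p q => by
    simp [Matrix.mul_apply]
  have hdiag : ∀ q, (D.transpose * D) q q = 1 := fun q => by simpa [hgram, ← sq] using hunit q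
  have hoff : ∀ q, ∑ p ∈ univ.erase q, |(D.transpose * D) p q| ≤
      ((s : ℝ) - 1) * ν + s * ((k : ℝ) - 1) * χ := fun q => by
    simpa using sum_erase_le_of_block_bound (fun p => |(D.transpose * D) p q|) q
      (fun b hb => by simpa [hgram] using hsub q.1 b q.2 hb)
      (fun p hp => by simpa [hgram] using hcross p.1 q.1 p.2 q.2 hp)
  simpa only [one_div, sub_sub] using Matrix.isUnit_and_norm11_inv_le hlt hdiag hoff

/-- If `(s−1)ν + s(k−1)χ < 1`, then `D_{S₀}ᵀD_{S₀}` is invertible and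
`‖(D_{S₀}ᵀD_{S₀})⁻¹‖_{1,1} ≤ 1/(1 − (s−1)ν − s(k−1)χ)`. -/
theorem gram_inv_norm11_bound {m k s : ℕ}
    (D : Matrix (Fin m) (Fin k × Fin s) ℝ)
    (hunit : ∀ j, ∑ i, D i j ^ 2 = 1)
    (ν χ : ℝ) (hν : 0 ≤ ν) (hχ : 0 ≤ χ)
    (hsub : ∀ (i : Fin k) (a b : Fin s), a ≠ b →
      |∑ r, D r (i, a) * D r (i, b)| ≤ ν)
    (hcross : ∀ (i j : Fin k) (a b : Fin s), i ≠ j →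
      |∑ r, D r (i, a) * D r (j, b)| ≤ χ)
    (hlt : ((s : ℝ) - 1) * ν + (s : ℝ) * ((k : ℝ) - 1) * χ < 1) :
    IsUnit (D.transpose * D) ∧
      norm11 (D.transpose * D)⁻¹ ≤
        1 / (1 - ((s : ℝ) - 1) * ν - (s : ℝ) * ((k : ℝ) - 1) * χ) :=
  gram_inv_norm11_bound_general D hunit ν χ hsub hcross hlt
end
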